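/- Let p be an odd prime and (e_1,...,e_n) a sequence of nonnegative integers. In F_p[y_1,...,y_n]: [e_1,...,e_{n-1}, e_n+n-1] = Σ_{s=0}^{n-2} (-1)^{n+s} [e_1,...,e_{n-1}, e_n+s] · Q_{n-1,s}^{p^{e_n}} + [e_1,...,e_{n-1}] · V_n^{p^{e_n}}, where [e_1,...,e_{n-1}] is the (n-1)×(n-1) determinant in y_1,...,y_{n-1}, Q_{n-1,s} are Dickson invariants in y_1,...,y_{n-1}, and V_n = L_n/L_{n-1}. -/

import Mathlib

open MvPolynomial Finset

/-!
Write `L = L_n(y_1,…,y_n)` and `q = p ^ e_{n+1}`. Expanding the Moore determinant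
`L_{n+1}(y_1,…,y_n,x)` along the row of `x` gives
`L · x^{p^n} = L_{n+1}(y_1,…,y_n,x) + Σ_{s<n} (-1)^{n+1+s} L_{n,s} x^{p^s}`,
and raising to the power `q` is additive in characteristic `p`. Substituting `x = y_i`, the Moore
determinant vanishes for `i ≤ n` (two equal rows) and is `L_{n+1}` for `i = n+1`, so `L^q` times the
last column of `[e_1,…,e_n,e_{n+1}+n]` is a combination of the columns `(y_i^{p^{e_{n+1}+s}})_i` and
of `L_{n+1}^q` times a unit vector. Linearity of the determinant in that column, together with
`L Q_{n,s} = L_{n,s}` and `L V = L_{n+1}`, gives the identity multiplied by `L^q`, and `L ≠ 0`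
because its diagonal monomial has coefficient `1`.
-/

/-- `br p e = det (y_i ^ (p ^ e_j))` in `F_p[y_1,…,y_n]`. -/
noncomputable def br (p : ℕ) {n : ℕ} (e : Fin n → ℕ) : MvPolynomial (Fin n) (ZMod p) :=
  Matrix.det (Matrix.of fun i j : Fin n => (X i : MvPolynomial (Fin n) (ZMod p)) ^ p ^ e j)

/-- `L_n = [0,1,…,n-1]`. -/
noncomputable def Lpoly (p n : ℕ) : MvPolynomial (Fin n) (ZMod p) :=
  br p (fun j : Fin n => (j : ℕ))

/-- `L_{n,s} = [0,…,ŝ,…,n]`. -/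
noncomputable def Ls (p n s : ℕ) : MvPolynomial (Fin n) (ZMod p) :=
  br p (fun j : Fin n => if (j : ℕ) < s then (j : ℕ) else (j : ℕ) + 1)

open Matrix

def brMatrix {R : Type*} [CommRing R] (p : ℕ) {n : ℕ} (v : Fin n → R) (e : Fin n → ℕ) :
    Matrix (Fin n) (Fin n) R :=
  of fun i j => v i ^ p ^ e j

/-- The Moore determinant `L_{n+1}(y_1,…,y_n,x)`. -/
noncomputable def mooreLast (p n : ℕ) (x : MvPolynomial (Fin (n + 1)) (ZMod p)) :
    MvPolynomial (Fin (n + 1)) (ZMod p) :=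
  (brMatrix p (Function.update X (Fin.last n) x) Fin.val).det

variable {p : ℕ}

lemma br_eq_det {n : ℕ} (e : Fin n → ℕ) : br p e = (brMatrix p X e).det := rfl

lemma rename_br {n m : ℕ} (f : Fin n → Fin m) (e : Fin n → ℕ) :
    rename f (br p e) = (brMatrix p (fun i => X (f i)) e).det := by
  rw [br_eq_det, AlgHom.map_det]
  congr 1
  ext i j
  simp [brMatrix]

lemma Fin.val_succAbove {n : ℕ} (s : Fin (n + 1)) (b : Fin n) :
    (s.succAbove b : ℕ) = if (b : ℕ) < s then (b : ℕ) else b + 1 := by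
  rw [Fin.succAbove]
  split_ifs <;> simp_all [Fin.lt_def]

lemma Ls_eq_br_succAbove (n : ℕ) (s : Fin (n + 1)) :
    Ls p n s = br p (fun j => (s.succAbove j : ℕ)) := by
  simp only [Ls, Fin.val_succAbove]

lemma Ls_self (n : ℕ) : Ls p n n = Lpoly p n := by
  simp only [Ls, Lpoly, Fin.is_lt, if_true]

lemma prod_brMatrix_X_perm {n : ℕ} (e : Fin n → ℕ) (σ : Equiv.Perm (Fin n)) :
    ∏ i, brMatrix p (X : Fin n → MvPolynomial (Fin n) (ZMod p)) e (σ i) i =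
      monomial (∑ i, Finsupp.single (σ i) (p ^ e i)) 1 := by
  simp only [brMatrix, of_apply, X_pow_eq_monomial, monomial_sum_one]

lemma br_ne_zero (hp : p.Prime) {n : ℕ} {e : Fin n → ℕ} (he : Function.Injective e) :
    br p e ≠ 0 := by
  classical
  set d : Equiv.Perm (Fin n) → Fin n →₀ ℕ := fun σ => ∑ i, Finsupp.single (σ i) (p ^ e i)
  have hd : ∀ σ k, d σ (σ k) = p ^ e k := by
    intro σ k
    simp [d, Finsupp.single_apply, σ.injective.eq_iff]
  have hd_inj : ∀ σ, d σ = d 1 → σ = 1 := by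
    intro σ h
    ext k
    have hk := hd 1 (σ k)
    rw [Equiv.Perm.one_apply, ← h, hd] at hk
    exact congrArg Fin.val (he (Nat.pow_right_injective hp.two_le hk)).symm
  have hcoeff : coeff (d 1) (br p e) = 1 := by
    rw [br_eq_det, det_apply, coeff_sum, Finset.sum_eq_single 1]
    · rw [Equiv.Perm.sign_one, one_smul, prod_brMatrix_X_perm, coeff_monomial, if_pos rfl]
    · intro σ _ hσ
      rw [prod_brMatrix_X_perm, coeff_smul, coeff_monomial, if_neg (mt (hd_inj σ) hσ), smul_zero]
    · simp
  have := Fact.mk hp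
  intro h
  simp [h] at hcoeff

lemma Lpoly_ne_zero (hp : p.Prime) (n : ℕ) : Lpoly p n ≠ 0 :=
  br_ne_zero hp Fin.val_injective

lemma mooreLast_X_last (n : ℕ) : mooreLast p n (X (Fin.last n)) = Lpoly p (n + 1) := by
  rw [mooreLast, Function.update_eq_self]
  rfl

lemma mooreLast_X_of_ne {n : ℕ} {i : Fin (n + 1)} (hi : i ≠ Fin.last n) :
    mooreLast p n (X i) = 0 :=
  det_zero_of_row_eq hi (by funext j; simp [brMatrix, hi])

lemma mooreLast_eq_sum (n : ℕ) (x : MvPolynomial (Fin (n + 1)) (ZMod p)) :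
    mooreLast p n x = ∑ s : Fin (n + 1),
      (-1) ^ (n + (s : ℕ)) * rename Fin.castSucc (Ls p n s) * x ^ p ^ (s : ℕ) := by
  rw [mooreLast, det_succ_row _ (Fin.last n)]
  refine sum_congr rfl fun s _ => ?_
  rw [mul_right_comm, Ls_eq_br_succAbove, rename_br]
  congr 2
  · congr 1
    ext a b
    simp [brMatrix, Fin.succAbove_last, (Fin.castSucc_lt_last a).ne]
  · simp [brMatrix]

lemma rename_Lpoly_mul_pow (n : ℕ) (x : MvPolynomial (Fin (n + 1)) (ZMod p)) :
    rename Fin.castSucc (Lpoly p n) * x ^ p ^ n = mooreLast p n x +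
      ∑ s : Fin n, (-1) ^ (n + 1 + (s : ℕ)) * rename Fin.castSucc (Ls p n s) * x ^ p ^ (s : ℕ) := by
  have hsign : ∀ k : ℕ, (-1 : MvPolynomial (Fin (n + 1)) (ZMod p)) ^ (n + 1 + k) =
      -(-1) ^ (n + k) := fun k => by ring
  have hlast : (-1 : MvPolynomial (Fin (n + 1)) (ZMod p)) ^ (n + n) = 1 :=
    Even.neg_one_pow ⟨n, rfl⟩
  simp only [mooreLast_eq_sum, Fin.sum_univ_castSucc, Fin.val_castSucc, Fin.val_last, hlast,
    Ls_self, hsign, neg_mul, sum_neg_distrib]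
  ring

lemma rename_Lpoly_pow_mul_pow [Fact p.Prime] (n m : ℕ) (x : MvPolynomial (Fin (n + 1)) (ZMod p)) :
    rename Fin.castSucc (Lpoly p n) ^ p ^ m * x ^ p ^ (m + n) = mooreLast p n x ^ p ^ m +
      ∑ s : Fin n, (-1) ^ (n + 1 + (s : ℕ)) * rename Fin.castSucc (Ls p n s) ^ p ^ m *
        x ^ p ^ (m + s) := by
  have hsign : ∀ k : ℕ, ((-1 : MvPolynomial (Fin (n + 1)) (ZMod p)) ^ k) ^ p ^ m = (-1) ^ k :=
    fun k => by rw [← iterateFrobenius_def, map_pow, map_neg, map_one]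
  have hx : ∀ k : ℕ, (x ^ p ^ k) ^ p ^ m = x ^ p ^ (m + k) :=
    fun k => by rw [← pow_mul, ← pow_add, Nat.add_comm k m]
  have h := congrArg (iterateFrobenius (MvPolynomial (Fin (n + 1)) (ZMod p)) p m)
    (rename_Lpoly_mul_pow n x)
  simpa only [map_add, map_sum, map_mul, iterateFrobenius_def, hsign, hx] using h

lemma rename_Lpoly_pow_smul_X_pow [Fact p.Prime] (n m : ℕ) :
    rename Fin.castSucc (Lpoly p n) ^ p ^ m • (fun i => X i ^ p ^ (m + n)) =
      Pi.single (Fin.last n) (Lpoly p (n + 1) ^ p ^ m) +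
        ∑ s : Fin n, ((-1) ^ (n + 1 + (s : ℕ)) * rename Fin.castSucc (Ls p n s) ^ p ^ m) •
          fun i => X i ^ p ^ (m + s) := by
  funext i
  simp only [Pi.smul_apply, smul_eq_mul, rename_Lpoly_pow_mul_pow, Pi.add_apply, Finset.sum_apply]
  rcases eq_or_ne i (Fin.last n) with rfl | hi
  · simp [mooreLast_X_last]
  · simp [mooreLast_X_of_ne hi, hi, (Fact.out : p.Prime).ne_zero]

lemma cramer_single_last {R : Type*} [CommRing R] {n : ℕ}
    (A : Matrix (Fin (n + 1)) (Fin (n + 1)) R) (c : R) :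
    cramer A (Pi.single (Fin.last n) c) (Fin.last n) =
      c * (A.submatrix Fin.castSucc Fin.castSucc).det := by
  rw [cramer_apply, det_succ_column _ (Fin.last n),
    Fintype.sum_eq_single (Fin.last n) fun i hi => by simp [Pi.single_eq_of_ne hi]]
  have hminor : (A.updateCol (Fin.last n) (Pi.single (Fin.last n) c)).submatrix
      Fin.castSucc Fin.castSucc = A.submatrix Fin.castSucc Fin.castSucc := by
    ext a b
    simp [(Fin.castSucc_lt_last b).ne]
  simp [Fin.succAbove_last, Even.neg_one_pow ⟨n, rfl⟩, hminor]

lemma cramer_brMatrix_single_last {n : ℕ} (e : Fin (n + 1) → ℕ)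
    (c : MvPolynomial (Fin (n + 1)) (ZMod p)) :
    cramer (brMatrix p X e) (Pi.single (Fin.last n) c) (Fin.last n) =
      c * rename Fin.castSucc (br p (e ∘ Fin.castSucc)) := by
  rw [cramer_single_last, rename_br]
  rfl

lemma cramer_brMatrix_X_pow {n : ℕ} (e : Fin (n + 1) → ℕ) (k : ℕ) :
    cramer (brMatrix p X e) (fun i => X i ^ p ^ (e (Fin.last n) + k)) (Fin.last n) =
      br p (fun j => if j = Fin.last n then e j + k else e j) := by
  rw [cramer_apply, br_eq_det]
  congr 1
  ext i j
  rcases eq_or_ne j (Fin.last n) with rfl | hj <;> simp [brMatrix, *]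

/-- The paper's `n` is `n + 1` here. -/
theorem stmt5_general (p n : ℕ) (hp : p.Prime) (e : Fin (n + 1) → ℕ)
    (Q : Fin n → MvPolynomial (Fin n) (ZMod p))
    (hQ : ∀ s : Fin n, Lpoly p n * Q s = Ls p n (s : ℕ))
    (V : MvPolynomial (Fin (n + 1)) (ZMod p))
    (hV : rename Fin.castSucc (Lpoly p n) * V = Lpoly p (n + 1)) :
    br p (fun j : Fin (n + 1) => if j = Fin.last n then e j + n else e j) =
      (∑ s : Fin n,
        (-1 : MvPolynomial (Fin (n + 1)) (ZMod p)) ^ (n + 1 + (s : ℕ)) *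
          br p (fun j : Fin (n + 1) => if j = Fin.last n then e j + (s : ℕ) else e j) *
          (rename Fin.castSucc (Q s)) ^ p ^ e (Fin.last n)) +
      rename Fin.castSucc (br p (e ∘ Fin.castSucc)) * V ^ p ^ e (Fin.last n) := by
  have := Fact.mk hp
  have hL : rename Fin.castSucc (Lpoly p n) ^ p ^ e (Fin.last n) ≠ 0 :=
    pow_ne_zero _ <| (map_ne_zero_iff _ (rename_injective _ (Fin.castSucc_injective n))).mpr
      (Lpoly_ne_zero hp n)
  have hdet := congrArg (fun v => cramer (brMatrix p X e) v (Fin.last n))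
    (rename_Lpoly_pow_smul_X_pow (p := p) n (e (Fin.last n)))
  simp only [map_smul, map_add, map_sum, Pi.smul_apply, Pi.add_apply, Finset.sum_apply,
    smul_eq_mul, cramer_brMatrix_X_pow, cramer_brMatrix_single_last] at hdet
  apply mul_left_cancel₀ hL
  rw [hdet, mul_add, Finset.mul_sum, add_comm (_ ^ _ * _), ← hV]
  simp only [← hQ, map_mul, mul_pow]
  congr 1
  · exact sum_congr rfl fun s _ => by ring
  · ring

/-- (The paper's `n` is `n+1`.)  For a sequence `e : Fin (n+1) → ℕ`:
`[e_1,…,e_n, e_{n+1}+n] = Σ_{s=0}^{n-1} (-1)^{(n+1)+s} [e_1,…,e_n, e_{n+1}+s] · Q_{n,s}^{p^{e_{n+1}}}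
  + [e_1,…,e_n] · V_{n+1}^{p^{e_{n+1}}}`,
where `Q_{n,s}` are Dickson invariants in the first `n` variables and `V_{n+1} = L_{n+1}/L_n`. -/
theorem stmt5 (p n : ℕ) (hp : p.Prime) (hodd : Odd p) (e : Fin (n + 1) → ℕ)
    (Q : Fin n → MvPolynomial (Fin n) (ZMod p))
    (hQ : ∀ s : Fin n, Lpoly p n * Q s = Ls p n (s : ℕ))
    (V : MvPolynomial (Fin (n + 1)) (ZMod p))
    (hV : rename Fin.castSucc (Lpoly p n) * V = Lpoly p (n + 1)) :
    br p (fun j : Fin (n + 1) => if j = Fin.last n then e j + n else e j) =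
      (∑ s : Fin n,
        (-1 : MvPolynomial (Fin (n + 1)) (ZMod p)) ^ (n + 1 + (s : ℕ)) *
          br p (fun j : Fin (n + 1) => if j = Fin.last n then e j + (s : ℕ) else e j) *
          (rename Fin.castSucc (Q s)) ^ p ^ e (Fin.last n)) +
      rename Fin.castSucc (br p (e ∘ Fin.castSucc)) * V ^ p ^ e (Fin.last n) :=
  stmt5_general p n hp e Q hQ V hV
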